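/- For any path system τ, the function β_τ takes values in B_d (the signed edge-crossing count function of any closed lattice path has zero divergence at every vertex), and β_τ satisfies the 2-cocycle identity v·β_τ(w,u) + β_τ(v, w+u) = β_τ(v,w) + β_τ(v+w, u) for all v, w, u ∈ ℤ^d. -/
import Mathlib


open scoped BigOperators

/-- Lattice points of `ℤ^d`. -/
abbrev Pt (d : ℕ) : Type := Fin d → ℤ

/-- Oriented edges of the grid: `(v, i)` is the edge from `v` to `v + eᵢ`. -/
abbrev Edg (d : ℕ) : Type := (Fin d → ℤ) × Fin d

/-- The `i`-th standard basis vector of `ℤ^d`. -/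
def latE (d : ℕ) (i : Fin d) : Pt d := fun j => if j = i then 1 else 0

/-- Zero-divergence condition defining `1`-cycles on the grid. -/
def IsCycle (d : ℕ) (f : Edg d →₀ ℤ) : Prop :=
  ∀ u : Pt d, ∑ i : Fin d, (f (u, i) - f (u - latE d i, i)) = 0

/-- `B_d`: the additive group of `1`-cycles on the grid. -/
noncomputable def Bgrp (d : ℕ) : AddSubgroup (Edg d →₀ ℤ) where
  carrier := {f | IsCycle d f}
  zero_mem' := by intro u; simp
  add_mem' := by
    intro f g hf hg u
    have h1 := hf u
    have h2 := hg u
    calc ∑ i : Fin d, ((f + g) (u, i) - (f + g) (u - latE d i, i))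
        = ∑ i : Fin d, ((f (u, i) - f (u - latE d i, i))
            + (g (u, i) - g (u - latE d i, i))) := by
          refine Finset.sum_congr rfl fun i _ => ?_
          simp only [Finsupp.add_apply]; ring
      _ = 0 := by rw [Finset.sum_add_distrib, h1, h2, add_zero]
  neg_mem' := by
    intro f hf u
    have h1 := hf u
    calc ∑ i : Fin d, ((-f) (u, i) - (-f) (u - latE d i, i))
        = ∑ i : Fin d, -((f (u, i) - f (u - latE d i, i))) := by
          refine Finset.sum_congr rfl fun i _ => ?_
          simp only [Finsupp.neg_apply]; ring
      _ = 0 := by rw [Finset.sum_neg_distrib, h1, neg_zero]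

/-- Translation of `ℤ^d` on edges. -/
def edgeShift (d : ℕ) (u : Pt d) : Edg d ≃ Edg d where
  toFun p := (p.1 + u, p.2)
  invFun p := (p.1 - u, p.2)
  left_inv p := by simp
  right_inv p := by simp

/-- The translation action of `ℤ^d` on integer functions on edges:
`(u · f)(v, i) = f (v - u, i)`. -/
noncomputable def shiftF (d : ℕ) (u : Pt d) (f : Edg d →₀ ℤ) : Edg d →₀ ℤ :=
  Finsupp.equivMapDomain (edgeShift d u) f

/-- One step of a lattice path: the letter `(i, b)` moves by `eᵢ` if `b` and by `-eᵢ`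
otherwise. -/
def stepFn (d : ℕ) (p : Pt d) (s : Fin d × Bool) : Pt d :=
  p + (if s.2 then latE d s.1 else -latE d s.1)

/-- Total displacement of a word (= endpoint of the associated lattice path started at `0`). -/
def disp (d : ℕ) (w : List (Fin d × Bool)) : Pt d :=
  (w.map fun s => if s.2 then latE d s.1 else -latE d s.1).sum

/-- The signed edge-crossing count function of the lattice path spelled by the word `w`
starting at the point `p`. -/
noncomputable def crossFrom (d : ℕ) : Pt d → List (Fin d × Bool) → (Edg d →₀ ℤ)
  | _, [] => 0
  | p, s :: rest =>
      (if s.2 then Finsupp.single (p, s.1) (1 : ℤ)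
        else Finsupp.single (p - latE d s.1, s.1) (-1))
      + crossFrom d (stepFn d p s) rest

/-- The reversed path: spell the word backwards with all signs flipped. -/
def wordInv (d : ℕ) (w : List (Fin d × Bool)) : List (Fin d × Bool) :=
  w.reverse.map fun s => (s.1, !s.2)

/-- The 2-cocycle associated to a path system `τ`: the signed edge-crossing count of the
closed path `τ_v ⬝ (v + τ_w) ⬝ (τ_{v+w})⁻¹`. -/
noncomputable def betaCocycle (d : ℕ) (τ : Pt d → List (Fin d × Bool)) (v w : Pt d) : Edg d →₀ ℤ :=
  crossFrom d 0 (τ v ++ τ w ++ wordInv d (τ (v + w)))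

/-- The elementary `(i,j)`-placket at `v`. -/
noncomputable def placket (d : ℕ) (v : Pt d) (i j : Fin d) : Edg d →₀ ℤ :=
  Finsupp.single (v, i) 1 + Finsupp.single (v + latE d i, j) 1
    - Finsupp.single (v + latE d j, i) 1 - Finsupp.single (v, j) 1

section Aux

variable (d : ℕ)

/-- Divergence of `f` at the vertex `u`. -/
noncomputable def divAt (f : Edg d →₀ ℤ) (u : Pt d) : ℤ :=
  ∑ i : Fin d, (f (u, i) - f (u - latE d i, i))

lemma divAt_add (f g : Edg d →₀ ℤ) (u : Pt d) :
    divAt d (f + g) u = divAt d f u + divAt d g u := by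
  unfold divAt
  rw [← Finset.sum_add_distrib]
  refine Finset.sum_congr rfl fun i _ => ?_
  simp only [Finsupp.add_apply]; ring

lemma divAt_single (q : Pt d) (i : Fin d) (a : ℤ) (u : Pt d) :
    divAt d (Finsupp.single (q, i) a) u
      = (if u = q then a else 0) - (if u = q + latE d i then a else 0) := by
  classical
  unfold divAt
  rw [Finset.sum_eq_single i]
  · have h1 : (Finsupp.single (q, i) a : Edg d →₀ ℤ) (u, i) = if u = q then a else 0 := by
      simp [Finsupp.single_apply, Prod.ext_iff, eq_comm]
    have h2 : (Finsupp.single (q, i) a : Edg d →₀ ℤ) (u - latE d i, i)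
        = if u = q + latE d i then a else 0 := by
      by_cases h : u = q + latE d i
      · subst h
        have hq : q + latE d i - latE d i = q := by abel
        rw [if_pos rfl, hq, Finsupp.single_apply, if_pos rfl]
      · rw [if_neg h, Finsupp.single_apply, if_neg]
        intro hc
        apply h
        have hq : q = u - latE d i := congrArg Prod.fst hc
        exact (sub_eq_iff_eq_add.mp hq.symm)
    rw [h1, h2]
  · intro j _ hj
    have h1 : (Finsupp.single (q, i) a : Edg d →₀ ℤ) (u, j) = 0 := by
      rw [Finsupp.single_apply, if_neg]
      simp [Prod.ext_iff]; intro _; exact fun h => hj h.symm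
    have h2 : (Finsupp.single (q, i) a : Edg d →₀ ℤ) (u - latE d j, j) = 0 := by
      rw [Finsupp.single_apply, if_neg]
      simp [Prod.ext_iff]; intro _; exact fun h => hj h.symm
    rw [h1, h2, sub_zero]
  · intro h; exact absurd (Finset.mem_univ i) h

lemma disp_cons (s : Fin d × Bool) (w : List (Fin d × Bool)) :
    disp d (s :: w) = (if s.2 then latE d s.1 else -latE d s.1) + disp d w := by
  simp [disp]

lemma disp_append (w₁ w₂ : List (Fin d × Bool)) :
    disp d (w₁ ++ w₂) = disp d w₁ + disp d w₂ := by
  simp [disp]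

lemma disp_wordInv (w : List (Fin d × Bool)) :
    disp d (wordInv d w) = -disp d w := by
  induction w with
  | nil => simp [disp, wordInv]
  | cons s rest ih =>
      have : wordInv d (s :: rest) = wordInv d rest ++ [(s.1, !s.2)] := by
        simp [wordInv]
      rw [this, disp_append, ih, disp_cons]
      cases hb : s.2 <;> simp [disp, hb] <;> abel

lemma stepFn_eq (p : Pt d) (s : Fin d × Bool) :
    stepFn d p s = p + (if s.2 then latE d s.1 else -latE d s.1) := rfl

lemma crossFrom_div (w : List (Fin d × Bool)) : ∀ (p u : Pt d),
    divAt d (crossFrom d p w) u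
      = (if u = p then 1 else 0) - (if u = p + disp d w then 1 else 0) := by
  induction w with
  | nil =>
      intro p u
      simp [crossFrom, divAt, disp]
  | cons s rest ih =>
      intro p u
      rw [show crossFrom d p (s :: rest)
          = (if s.2 then Finsupp.single (p, s.1) (1 : ℤ)
              else Finsupp.single (p - latE d s.1, s.1) (-1))
            + crossFrom d (stepFn d p s) rest from rfl]
      rw [divAt_add, ih]
      have hend : stepFn d p s + disp d rest = p + disp d (s :: rest) := by
        rw [stepFn_eq, disp_cons]; abel
      rw [hend]
      cases hb : s.2 with
      | true =>
          rw [if_pos rfl, divAt_single]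
          have hst : stepFn d p s = p + latE d s.1 := by rw [stepFn_eq, hb]; simp
          rw [hst]
          split_ifs <;> ring
      | false =>
          rw [if_neg (by simp), divAt_single]
          have h1 : p - latE d s.1 + latE d s.1 = p := by abel
          have h2 : stepFn d p s = p - latE d s.1 := by
            rw [stepFn_eq, hb]; simp; abel
          rw [h1, h2]
          split_ifs <;> ring

lemma crossFrom_closed_mem (w : List (Fin d × Bool)) (p : Pt d)
    (hw : disp d w = 0) : crossFrom d p w ∈ Bgrp d := by
  intro u
  have h := crossFrom_div d w p u
  rw [hw, add_zero, sub_self] at h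
  exact h

lemma shiftF_apply (u : Pt d) (f : Edg d →₀ ℤ) (q : Pt d) (i : Fin d) :
    shiftF d u f (q, i) = f (q - u, i) := rfl

lemma shiftF_add (u : Pt d) (f g : Edg d →₀ ℤ) :
    shiftF d u (f + g) = shiftF d u f + shiftF d u g := by
  ext ⟨q, i⟩
  simp [shiftF_apply]

lemma shiftF_single (u : Pt d) (q : Pt d) (i : Fin d) (a : ℤ) :
    shiftF d u (Finsupp.single (q, i) a) = Finsupp.single (q + u, i) a := by
  unfold shiftF
  rw [Finsupp.equivMapDomain_single]
  rfl

lemma crossFrom_shift (w : List (Fin d × Bool)) : ∀ (p u : Pt d),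
    shiftF d u (crossFrom d p w) = crossFrom d (p + u) w := by
  induction w with
  | nil => intro p u; ext ⟨q, i⟩; simp [crossFrom, shiftF_apply]
  | cons s rest ih =>
      intro p u
      rw [show crossFrom d p (s :: rest)
          = (if s.2 then Finsupp.single (p, s.1) (1 : ℤ)
              else Finsupp.single (p - latE d s.1, s.1) (-1))
            + crossFrom d (stepFn d p s) rest from rfl]
      rw [show crossFrom d (p + u) (s :: rest)
          = (if s.2 then Finsupp.single (p + u, s.1) (1 : ℤ)
              else Finsupp.single (p + u - latE d s.1, s.1) (-1))
            + crossFrom d (stepFn d (p + u) s) rest from rfl]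
      rw [shiftF_add, ih]
      have hstep : stepFn d p s + u = stepFn d (p + u) s := by
        rw [stepFn_eq, stepFn_eq]; abel
      rw [hstep]
      congr 1
      cases hb : s.2 with
      | true => simp only [ite_true]; rw [shiftF_single]
      | false =>
          simp only [Bool.false_eq_true, ite_false, if_false]
          rw [shiftF_single,
            show p - latE d s.1 + u = p + u - latE d s.1 by abel]

lemma crossFrom_append (w₁ w₂ : List (Fin d × Bool)) : ∀ p : Pt d,
    crossFrom d p (w₁ ++ w₂)
      = crossFrom d p w₁ + crossFrom d (p + disp d w₁) w₂ := by
  induction w₁ with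
  | nil => intro p; simp [crossFrom, disp]
  | cons s rest ih =>
      intro p
      rw [List.cons_append]
      rw [show crossFrom d p (s :: (rest ++ w₂))
          = (if s.2 then Finsupp.single (p, s.1) (1 : ℤ)
              else Finsupp.single (p - latE d s.1, s.1) (-1))
            + crossFrom d (stepFn d p s) (rest ++ w₂) from rfl]
      rw [ih]
      have : stepFn d p s + disp d rest = p + disp d (s :: rest) := by
        rw [stepFn_eq, disp_cons]; abel
      rw [this, show crossFrom d p (s :: rest)
          = (if s.2 then Finsupp.single (p, s.1) (1 : ℤ)
              else Finsupp.single (p - latE d s.1, s.1) (-1))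
            + crossFrom d (stepFn d p s) rest from rfl]
      rw [add_assoc]

lemma crossFrom_wordInv (w : List (Fin d × Bool)) : ∀ p : Pt d,
    crossFrom d (p + disp d w) (wordInv d w) = -crossFrom d p w := by
  induction w with
  | nil => intro p; simp [crossFrom, wordInv]
  | cons s rest ih =>
      intro p
      have hwi : wordInv d (s :: rest) = wordInv d rest ++ [(s.1, !s.2)] := by
        simp [wordInv]
      rw [hwi, crossFrom_append]
      have hbase : p + disp d (s :: rest) = stepFn d p s + disp d rest := by
        rw [stepFn_eq, disp_cons]; abel
      rw [hbase, ih]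
      have hlast : stepFn d p s + disp d rest + disp d (wordInv d rest)
          = stepFn d p s := by rw [disp_wordInv]; abel
      rw [hlast]
      rw [show crossFrom d p (s :: rest)
          = (if s.2 then Finsupp.single (p, s.1) (1 : ℤ)
              else Finsupp.single (p - latE d s.1, s.1) (-1))
            + crossFrom d (stepFn d p s) rest from rfl]
      have hletter : crossFrom d (stepFn d p s) [(s.1, !s.2)]
          = -(if s.2 then Finsupp.single (p, s.1) (1 : ℤ)
              else Finsupp.single (p - latE d s.1, s.1) (-1)) := by
        cases hb : s.2 with
        | true =>
            have hst : stepFn d p s - latE d s.1 = p := by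
              rw [stepFn_eq, hb]; simp
            simp [crossFrom, hst, Finsupp.single_neg]
        | false =>
            have hst : stepFn d p s = p - latE d s.1 := by
              rw [stepFn_eq, hb]; simp; abel
            simp [crossFrom, hst, Finsupp.single_neg]
      rw [hletter]
      abel

lemma betaCocycle_eq (τ : Pt d → List (Fin d × Bool))
    (hτ : ∀ v : Pt d, disp d (τ v) = v) (p v w : Pt d) :
    crossFrom d p (τ v ++ τ w ++ wordInv d (τ (v + w)))
      = crossFrom d p (τ v) + crossFrom d (p + v) (τ w)
        - crossFrom d p (τ (v + w)) := by
  rw [crossFrom_append, crossFrom_append, hτ, disp_append, hτ, hτ]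
  have h2 : crossFrom d (p + (v + w)) (wordInv d (τ (v + w)))
      = -crossFrom d p (τ (v + w)) := by
    have := crossFrom_wordInv d (τ (v + w)) p
    rwa [hτ] at this
  rw [h2]
  abel

end Aux

/-- For any path system `τ`, the function `β_τ` takes values in `B_d`
(the crossing-count function of a closed lattice path has zero divergence everywhere),
and `β_τ` satisfies the 2-cocycle identity
`v·β_τ(w,u) + β_τ(v, w+u) = β_τ(v,w) + β_τ(v+w, u)`. -/
theorem betaCocycle_isCycle_and_cocycle_identity (d : ℕ)
    (τ : Pt d → List (Fin d × Bool))
    (hτ : ∀ v : Pt d, disp d (τ v) = v) :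
    (∀ v w : Pt d, betaCocycle d τ v w ∈ Bgrp d) ∧
    (∀ v w u : Pt d,
      shiftF d v (betaCocycle d τ w u) + betaCocycle d τ v (w + u)
        = betaCocycle d τ v w + betaCocycle d τ (v + w) u) := by
  constructor
  · intro v w
    apply crossFrom_closed_mem
    rw [disp_append, disp_append, disp_wordInv, hτ, hτ, hτ]
    abel
  · intro v w u
    unfold betaCocycle
    rw [betaCocycle_eq d τ hτ 0 v (w + u), betaCocycle_eq d τ hτ 0 v w,
      betaCocycle_eq d τ hτ 0 (v + w) u,
      crossFrom_shift d _ 0 v, betaCocycle_eq d τ hτ (0 + v) w u]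
    have h0 : (0 : Pt d) + v = v := by abel
    have h0' : (0 : Pt d) + (v + w) = v + w := by abel
    have hassoc : v + (w + u) = v + w + u := by abel
    rw [h0, h0', hassoc]
    abel
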